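/- arXiv:2509.22373 — 2 statements merged into one kernel-verified Lean document; each statement's English description precedes it below -/
import Mathlib

section
/- If A and B are invertible square matrices of arbitrary (possibly different) sizes, then A ⋉ B is invertible and (A ⋉ B)^{-1} = B^{-1} ⋉ A^{-1}. -/
open Matrix

/-- Row/left component of a lexicographic index in `Fin (a*b)`. -/
def fdiv {a b : ℕ} (k : Fin (a * b)) : Fin a :=
  ⟨(k : ℕ) / b, Nat.div_lt_of_lt_mul (Nat.mul_comm a b ▸ k.isLt)⟩

/-- Right component of a lexicographic index in `Fin (a*b)`. -/
def fmod {a b : ℕ} (k : Fin (a * b)) : Fin b :=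
  ⟨(k : ℕ) % b, Nat.mod_lt _ (Nat.pos_of_ne_zero (by rintro rfl; exact absurd k.isLt (by simp)))⟩

/-- Kronecker product of column vectors (lexicographic order of indices). -/
def vKron {m n : ℕ} (x : Fin m → ℝ) (y : Fin n → ℝ) : Fin (m * n) → ℝ :=
  fun k => x (fdiv k) * y (fmod k)

/-- Kronecker product of matrices, with `Fin`-indexed dimensions. -/
def mKron {m n p q : ℕ} (A : Matrix (Fin m) (Fin n) ℝ) (B : Matrix (Fin p) (Fin q) ℝ) :
    Matrix (Fin (m * p)) (Fin (n * q)) ℝ :=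
  fun i j => A (fdiv i) (fdiv j) * B (fmod i) (fmod j)

/-- Semi-tensor product of matrices: A ⋉ B = (A ⊗ I_{t/n})(B ⊗ I_{t/p}), t = lcm n p. -/
def stp {m n p q : ℕ} (A : Matrix (Fin m) (Fin n) ℝ) (B : Matrix (Fin p) (Fin q) ℝ) :
    Matrix (Fin (m * (Nat.lcm n p / n))) (Fin (q * (Nat.lcm n p / p))) ℝ :=
  mKron A (1 : Matrix (Fin (Nat.lcm n p / n)) (Fin (Nat.lcm n p / n)) ℝ) *
    (Matrix.reindex (finCongr (by
        rw [Nat.mul_div_cancel' (Nat.dvd_lcm_right n p),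
          Nat.mul_div_cancel' (Nat.dvd_lcm_left n p)])) (Equiv.refl _)
      (mKron B (1 : Matrix (Fin (Nat.lcm n p / p)) (Fin (Nat.lcm n p / p)) ℝ)))

/-- The swap matrix W_{[m,n]}: sends x ⊗ y to y ⊗ x. -/
def swapM (m n : ℕ) : Matrix (Fin (n * m)) (Fin (m * n)) ℝ :=
  fun i j => if (i : ℕ) = (fmod j : ℕ) * m + (fdiv j : ℕ) then 1 else 0

/-- Column-stacking vectorization of a matrix. -/
def vecc {m n : ℕ} (A : Matrix (Fin m) (Fin n) ℝ) : Fin (n * m) → ℝ :=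
  fun k => A (fmod k) (fdiv k)

/-- Iterated Kronecker product of column vectors. -/
def kronD : (d : ℕ) → (n : Fin d → ℕ) → ((i : Fin d) → Fin (n i) → ℝ) → Fin (∏ i, n i) → ℝ
  | 0, _, _ => fun _ => 1
  | d + 1, n, x => fun k =>
      vKron (x 0) (kronD d (fun i => n i.succ) (fun i => x i.succ))
        (Fin.cast (by rw [Fin.prod_univ_succ]) k)

/-- Lexicographic encoding of a multi-index into a single natural number. -/
def encode : (d : ℕ) → (n : Fin d → ℕ) → ((i : Fin d) → Fin (n i)) → ℕ
  | 0, _, _ => 0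
  | d + 1, n, f =>
      (f 0 : ℕ) * (∏ i : Fin d, n i.succ) + encode d (fun i => n i.succ) (fun i => f i.succ)

theorem encode_lt : ∀ (d : ℕ) (n : Fin d → ℕ) (f : (i : Fin d) → Fin (n i)),
    encode d n f < ∏ i, n i := by
  intro d
  induction d with
  | zero => intro n f; simp [encode]
  | succ d ih =>
    intro n f
    rw [Fin.prod_univ_succ]
    have h1 := ih (fun i => n i.succ) (fun i => f i.succ)
    have h2 := (f 0).isLt
    calc (f 0 : ℕ) * (∏ i : Fin d, n i.succ)
        + encode d (fun i => n i.succ) (fun i => f i.succ)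
        < (f 0 : ℕ) * (∏ i : Fin d, n i.succ) + (∏ i : Fin d, n i.succ) :=
          Nat.add_lt_add_left h1 _
      _ = ((f 0 : ℕ) + 1) * (∏ i : Fin d, n i.succ) := by ring
      _ ≤ n 0 * (∏ i : Fin d, n i.succ) := Nat.mul_le_mul_right _ h2

/-- The MDA projection map Ξ_i determined by the head multi-index e. -/
def proj (d : ℕ) (n : Fin d → ℕ) (e : (i : Fin d) → Fin (n i)) (i : Fin d)
    (x : Fin (∏ j, n j) → ℝ) : Fin (n i) → ℝ :=
  fun k => x ⟨encode d n (Function.update e i k), encode_lt d n _⟩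

/-- A vector is monic if its first nonzero entry equals 1. -/
def Monic {N : ℕ} (v : Fin N → ℝ) : Prop :=
  ∃ e : Fin N, v e = 1 ∧ ∀ j : Fin N, j < e → v j = 0

/-
After reindexing to size `t = lcm n p`, the semi-tensor product `A ⋉ B` is the ordinary product
`(A ⊗ I_{t/n}) (B ⊗ I_{t/p})` of two `t × t` matrices, and `A ↦ A ⊗ I` commutes with inversion
and has determinant `det A ^ (t/n)`. So `A ⋉ B` is invertible, and its inverse
`(B ⊗ I_{t/p})⁻¹ (A ⊗ I_{t/n})⁻¹ = (B⁻¹ ⊗ I_{t/p}) (A⁻¹ ⊗ I_{t/n})` is `B⁻¹ ⋉ A⁻¹` read at size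
`lcm p n = t`.
-/

open scoped Kronecker

section KronOne

variable {R : Type*} [CommRing R] {n a l : ℕ}

/-- `A ⊗ I_a`, viewed as an `l × l` matrix through `n * a = l`. -/
def kronOne (h : n * a = l) (A : Matrix (Fin n) (Fin n) R) : Matrix (Fin l) (Fin l) R :=
  reindex (finProdFinEquiv.trans (finCongr h)) (finProdFinEquiv.trans (finCongr h))
    (A ⊗ₖ (1 : Matrix (Fin a) (Fin a) R))

theorem kronOne_congr {a' : ℕ} (h : n * a = l) (h' : n * a' = l) (A : Matrix (Fin n) (Fin n) R) :
    kronOne h A = kronOne h' A := by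
  rcases Nat.eq_zero_or_pos n with rfl | hn
  · obtain rfl : l = 0 := by omega
    exact Subsingleton.elim _ _
  · obtain rfl : a = a' := Nat.eq_of_mul_eq_mul_left hn (h.trans h'.symm)
    rfl

theorem kronOne_inv (h : n * a = l) (A : Matrix (Fin n) (Fin n) R) :
    (kronOne h A)⁻¹ = kronOne h A⁻¹ := by
  rw [kronOne, kronOne, inv_reindex, inv_kronecker, inv_one]

theorem det_kronOne (h : n * a = l) (A : Matrix (Fin n) (Fin n) R) :
    (kronOne h A).det = A.det ^ a := by
  rw [kronOne, det_reindex_self, det_kronecker, det_one, one_pow, mul_one, Fintype.card_fin]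

end KronOne

theorem reindex_stp_eq_kronOne_mul {n p l : ℕ} (A : Matrix (Fin n) (Fin n) ℝ)
    (B : Matrix (Fin p) (Fin p) ℝ) (h₁ : n * (Nat.lcm n p / n) = l)
    (h₂ : p * (Nat.lcm n p / p) = l) :
    reindex (finCongr h₁) (finCongr h₂) (stp A B) = kronOne h₁ A * kronOne h₂ B :=
  submatrix_mul _ _ _ _ _ (finCongr h₁).symm.bijective

/-- If A and B are invertible square matrices, then A ⋉ B is invertible and
(A ⋉ B)⁻¹ = B⁻¹ ⋉ A⁻¹ (both viewed as matrices of size lcm n p). -/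
theorem stp_inv (n p : ℕ)
    (A : Matrix (Fin n) (Fin n) ℝ) (B : Matrix (Fin p) (Fin p) ℝ)
    (hA : IsUnit A.det) (hB : IsUnit B.det) :
    IsUnit
      (Matrix.reindex
        (finCongr (Nat.mul_div_cancel' (Nat.dvd_lcm_left n p)))
        (finCongr (Nat.mul_div_cancel' (Nat.dvd_lcm_right n p)))
        (stp A B)) ∧
    (Matrix.reindex
        (finCongr (Nat.mul_div_cancel' (Nat.dvd_lcm_left n p)))
        (finCongr (Nat.mul_div_cancel' (Nat.dvd_lcm_right n p)))
        (stp A B))⁻¹ =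
      Matrix.reindex
        (finCongr (by rw [Nat.mul_div_cancel' (Nat.dvd_lcm_left p n), Nat.lcm_comm] :
          p * (Nat.lcm p n / p) = Nat.lcm n p))
        (finCongr (by rw [Nat.mul_div_cancel' (Nat.dvd_lcm_right p n), Nat.lcm_comm] :
          n * (Nat.lcm p n / n) = Nat.lcm n p))
        (stp B⁻¹ A⁻¹) := by
  have h₁ : n * (Nat.lcm n p / n) = Nat.lcm n p := Nat.mul_div_cancel' (Nat.dvd_lcm_left n p)
  have h₂ : p * (Nat.lcm n p / p) = Nat.lcm n p := Nat.mul_div_cancel' (Nat.dvd_lcm_right n p)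
  have g₁ : p * (Nat.lcm p n / p) = Nat.lcm n p := by
    rw [Nat.mul_div_cancel' (Nat.dvd_lcm_left p n), Nat.lcm_comm]
  have g₂ : n * (Nat.lcm p n / n) = Nat.lcm n p := by
    rw [Nat.mul_div_cancel' (Nat.dvd_lcm_right p n), Nat.lcm_comm]
  rw [reindex_stp_eq_kronOne_mul A B h₁ h₂, reindex_stp_eq_kronOne_mul B⁻¹ A⁻¹ g₁ g₂,
    kronOne_congr g₁ h₂, kronOne_congr g₂ h₁]
  refine ⟨?_, by rw [Matrix.mul_inv_rev, kronOne_inv, kronOne_inv]⟩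
  rw [isUnit_iff_isUnit_det, det_mul, det_kronOne, det_kronOne]
  exact (hA.pow _).mul (hB.pow _)
end

section
/- Let x ∈ ℝ^{n₁⋯n_d} be nonzero with head index e and head value a, and let (e₁,...,e_d) be the multi-index corresponding to e under the lexicographic index correspondence. Define projections Ξ_i = (δ_{n₁}^{e₁})^T ⊗ ⋯ ⊗ (δ_{n_{i−1}}^{e_{i−1}})^T ⊗ I_{n_i} ⊗ (δ_{n_{i+1}}^{e_{i+1}})^T ⊗ ⋯ ⊗ (δ_{n_d}^{e_d})^T. If x is decomposable as a Kronecker product of vectors of sizes n₁, ..., n_d, then setting x₀ = x/a and x_i = Ξ_i x₀, each x_i is monic and x = a · (x₁ ⊗ ⋯ ⊗ x_d). -/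
open Matrix

/-!
Monicity only uses the head of `x`: `Ξ_i (x / a)` equals `1` at `e_i`, and its entries before
`e_i` are entries of `x` at multi-indices lexicographically below `e`, hence zero. If
`x = y₁ ⊗ ⋯ ⊗ y_d`, then `Ξ_i x = (∏_{j ≠ i} y_j(e_j)) • y_i`, so `x_i = y_i / y_i(e_i)`, and the
Kronecker product of these rescalings is `x / ∏_j y_j(e_j) = x / a`.
-/

open Finset Function

lemma vKron_apply_mul_add {m n : ℕ} (x : Fin m → ℝ) (y : Fin n → ℝ) (i : Fin m) (j : Fin n)
    (h : (i : ℕ) * n + j < m * n) : vKron x y ⟨i * n + j, h⟩ = x i * y j := by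
  have hdiv : ((i : ℕ) * n + j) / n = i := by
    rw [Nat.add_comm, Nat.add_mul_div_right _ _ (Nat.zero_lt_of_lt j.isLt),
      Nat.div_eq_of_lt j.isLt, Nat.zero_add]
  have hmod : ((i : ℕ) * n + j) % n = j := by
    rw [Nat.add_comm, Nat.add_mul_mod_self_right, Nat.mod_eq_of_lt j.isLt]
  simp only [vKron, fdiv, fmod, hdiv, hmod]

lemma encode_succ (d : ℕ) (n : Fin (d + 1) → ℕ) (f : (i : Fin (d + 1)) → Fin (n i)) :
    encode (d + 1) n f =
      (f 0 : ℕ) * (∏ i : Fin d, n i.succ) + encode d (fun i => n i.succ) (fun i => f i.succ) :=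
  rfl

lemma kronD_apply_encode (d : ℕ) (n : Fin d → ℕ) (y : (i : Fin d) → Fin (n i) → ℝ)
    (f : (i : Fin d) → Fin (n i)) :
    kronD d n y ⟨encode d n f, encode_lt d n f⟩ = ∏ i, y i (f i) := by
  induction d with
  | zero => simp [kronD]
  | succ d ih =>
    have hlt : encode (d + 1) n f < n 0 * ∏ i : Fin d, n i.succ :=
      Fin.prod_univ_succ n ▸ encode_lt (d + 1) n f
    rw [Fin.prod_univ_succ (fun i => y i (f i)),
      ← ih (fun i => n i.succ) (fun i => y i.succ) (fun i => f i.succ)]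
    exact vKron_apply_mul_add _ _ (f 0) ⟨_, encode_lt d _ _⟩ hlt

lemma kronD_smul (d : ℕ) (n : Fin d → ℕ) (c : Fin d → ℝ) (y : (i : Fin d) → Fin (n i) → ℝ) :
    kronD d n (fun i => c i • y i) = (∏ i, c i) • kronD d n y := by
  induction d with
  | zero => funext k; simp [kronD]
  | succ d ih =>
    funext k
    have hrest := congrFun (ih (fun i => n i.succ) (fun i => c i.succ) (fun i => y i.succ))
    simp only [kronD, vKron, hrest, Fin.prod_univ_succ, Pi.smul_apply, smul_eq_mul]
    ring

lemma encode_lt_encode (d : ℕ) (n : Fin d → ℕ) {f g : (i : Fin d) → Fin (n i)}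
    (h : toLex f < toLex g) : encode d n f < encode d n g := by
  induction d with
  | zero => obtain ⟨i, -⟩ := h; exact i.elim0
  | succ d ih =>
    obtain ⟨i, heq, hlt⟩ := h
    rw [encode_succ, encode_succ]
    induction i using Fin.cases with
    | zero =>
      calc (f 0 : ℕ) * (∏ i : Fin d, n i.succ) + encode d _ (fun i => f i.succ)
          < ((f 0 : ℕ) + 1) * ∏ i : Fin d, n i.succ := by
            rw [Nat.add_one_mul]; exact Nat.add_lt_add_left (encode_lt d _ _) _
        _ ≤ (g 0 : ℕ) * ∏ i : Fin d, n i.succ := Nat.mul_le_mul_right _ hlt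
        _ ≤ _ := Nat.le_add_right _ _
    | succ j =>
      have h0 : f 0 = g 0 := heq 0 (Fin.succ_pos j)
      rw [h0]
      exact Nat.add_lt_add_left (ih (fun i => n i.succ)
        ⟨j, fun m hm => heq m.succ (Fin.succ_lt_succ_iff.mpr hm), hlt⟩) _

lemma proj_smul (d : ℕ) (n : Fin d → ℕ) (e : (i : Fin d) → Fin (n i)) (i : Fin d) (c : ℝ)
    (x : Fin (∏ j, n j) → ℝ) : proj d n e i (c • x) = c • proj d n e i x :=
  rfl

lemma proj_kronD (d : ℕ) (n : Fin d → ℕ) (e : (i : Fin d) → Fin (n i)) (i : Fin d)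
    (y : (i : Fin d) → Fin (n i) → ℝ) :
    proj d n e i (kronD d n y) = (∏ j ∈ univ.erase i, y j (e j)) • y i := by
  funext k
  simp only [proj, kronD_apply_encode, apply_update, Pi.smul_apply, smul_eq_mul]
  rw [prod_update_of_mem (mem_univ i), sdiff_singleton_eq_erase, mul_comm]

lemma monic_proj_of_head (d : ℕ) (n : Fin d → ℕ) (x : Fin (∏ i, n i) → ℝ)
    (e : (i : Fin d) → Fin (n i)) (a : ℝ) (ha : a ≠ 0)
    (he : x ⟨encode d n e, encode_lt d n e⟩ = a)
    (hmin : ∀ j : Fin (∏ i, n i), (j : ℕ) < encode d n e → x j = 0) (i : Fin d) :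
    Monic (proj d n e i (a⁻¹ • x)) := by
  refine ⟨e i, ?_, fun k hk => ?_⟩
  · simp only [proj, update_eq_self, Pi.smul_apply, he, smul_eq_mul, inv_mul_cancel₀ ha]
  · have hlex : toLex (update e i k) < toLex e := Pi.toLex_update_lt_self_iff.mpr hk
    simp only [proj, Pi.smul_apply, hmin ⟨_, encode_lt d n _⟩ (encode_lt_encode d n hlex),
      smul_zero]

/-- If x is decomposable, then the MDA projections x_i = Ξ_i (x/a) are monic
and x = a · (x₁ ⊗ ⋯ ⊗ x_d), where a is the head value and e the head multi-index of x. -/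
theorem mda_decomposes (d : ℕ) (n : Fin d → ℕ) (x : Fin (∏ i, n i) → ℝ)
    (e : (i : Fin d) → Fin (n i)) (a : ℝ) (ha : a ≠ 0)
    (he : x ⟨encode d n e, encode_lt d n e⟩ = a)
    (hmin : ∀ j : Fin (∏ i, n i), (j : ℕ) < encode d n e → x j = 0)
    (hdec : ∃ y : (i : Fin d) → Fin (n i) → ℝ, x = kronD d n y) :
    (∀ i, Monic (proj d n e i (a⁻¹ • x))) ∧
    x = a • kronD d n (fun i => proj d n e i (a⁻¹ • x)) := by
  refine ⟨monic_proj_of_head d n x e a ha he hmin, ?_⟩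
  obtain ⟨y, rfl⟩ := hdec
  have hhead : ∏ i, y i (e i) = a := by rw [← he, kronD_apply_encode]
  have hnorm : ∀ i, proj d n e i (a⁻¹ • kronD d n y) = (y i (e i))⁻¹ • y i := by
    intro i
    have hsplit : y i (e i) * ∏ j ∈ univ.erase i, y j (e j) = a :=
      (mul_prod_erase univ _ (mem_univ i)).trans hhead
    have hrest : ∏ j ∈ univ.erase i, y j (e j) ≠ 0 := right_ne_zero_of_mul (hsplit ▸ ha)
    rw [proj_smul, proj_kronD, smul_smul, ← hsplit, mul_inv, mul_assoc, inv_mul_cancel₀ hrest,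
      mul_one]
  rw [funext hnorm, kronD_smul, prod_inv_distrib, hhead, smul_smul, mul_inv_cancel₀ ha, one_smul]
end
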